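/- For density matrices ρ and σ on a finite-dimensional Hilbert space, the trace distance satisfies ‖ρ − σ‖₁² ≤ 2 ln 2 · D(ρ‖σ) when D is taken with logarithm base 2 (equivalently ‖ρ−σ‖₁² ≤ 2·D_nat(ρ‖σ) with natural-log relative entropy), provided supp(ρ) ⊆ supp(σ). -/

import Mathlib

open Matrix
open scoped ComplexOrder

variable {d : Type*} [Fintype d] [DecidableEq d]

open Classical in
/-- Functional calculus for Hermitian matrices: apply `f` to the eigenvalues.
Returns `0` if the matrix is not Hermitian. -/
noncomputable def mfun (f : ℝ → ℝ) (A : Matrix d d ℂ) : Matrix d d ℂ :=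
  if hA : A.IsHermitian then
    (hA.eigenvectorUnitary : Matrix d d ℂ) *
      Matrix.diagonal (fun i => (f (hA.eigenvalues i) : ℂ)) *
      star (hA.eigenvectorUnitary : Matrix d d ℂ)
  else 0

/-- Matrix logarithm on the support (eigenvalues `≤ 0` are mapped to `0`). -/
noncomputable def logm (A : Matrix d d ℂ) : Matrix d d ℂ :=
  mfun (fun x => if x ≤ 0 then 0 else Real.log x) A

/-- Matrix real power on the support (eigenvalues `≤ 0` are mapped to `0`). -/
noncomputable def powm (A : Matrix d d ℂ) (p : ℝ) : Matrix d d ℂ :=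
  mfun (fun x => if x ≤ 0 then 0 else x ^ p) A

/-- Quantum relative entropy `D(ρ‖σ) = Tr(ρ (log ρ − log σ))` (natural log). -/
noncomputable def qRelEnt (ρ σ : Matrix d d ℂ) : ℝ :=
  ((ρ * (logm ρ - logm σ)).trace).re

/-- The support of `ρ` is contained in the support of `σ` (kernel containment,
equivalent to range containment for Hermitian matrices). -/
def SuppSubset (ρ σ : Matrix d d ℂ) : Prop :=
  ∀ v : d → ℂ, σ.mulVec v = 0 → ρ.mulVec v = 0

/-- Trace norm of a Hermitian matrix: `Tr |A|`. -/
noncomputable def traceNorm (A : Matrix d d ℂ) : ℝ :=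
  ((mfun (fun x => |x|) A).trace).re

/-! Diagonalize `ρ = U diag(p) U*`, `σ = V diag(q) V*` and let `S` be the sign of `ρ - σ`. With the
unitaries `M = U* V` and `N = U* S V`,
`‖ρ - σ‖₁ = Tr((ρ - σ) S) = ∑ᵢⱼ (pᵢ - qⱼ) Re(Nᵢⱼ M̄ᵢⱼ)` and
`D(ρ‖σ) = ∑ᵢⱼ |Mᵢⱼ|² (pᵢ log pᵢ - pᵢ log qⱼ - pᵢ + qⱼ)`, where `(|Mᵢⱼ|²)` and `(|Nᵢⱼ|²)` are doubly
stochastic. Cauchy–Schwarz with the weights `|Mᵢⱼ|² · 3(pᵢ - qⱼ)² / (pᵢ + 2qⱼ)` and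
`|Nᵢⱼ|² (pᵢ + 2qⱼ) / 3`, the latter summing to `1`, reduces the claim to the scalar inequality
`3(x - 1)² ≤ 2(x + 2)(x log x - x + 1)` for `x = pᵢ / qⱼ`. -/

namespace Real

open InformationTheory Set

lemma monotoneOn_add_one_mul_log_sub_two_mul_sub_one :
    MonotoneOn (fun x => (x + 1) * log x - 2 * (x - 1)) (Ioi 0) := by
  have hderiv : ∀ x ∈ Ioi (0 : ℝ),
      HasDerivAt (fun x => (x + 1) * log x - 2 * (x - 1)) (log x + x⁻¹ - 1) x := by
    intro x hx
    refine ((((hasDerivAt_id x).add_const 1).mul (hasDerivAt_log (mem_Ioi.1 hx).ne')).sub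
      (((hasDerivAt_id x).sub_const 1).const_mul 2)).congr_deriv ?_
    field_simp [(mem_Ioi.1 hx).ne']
    simp only [id]
    ring
  refine monotoneOn_of_hasDerivWithinAt_nonneg (f' := fun x => log x + x⁻¹ - 1) (convex_Ioi 0)
    (fun x hx => (hderiv x hx).continuousAt.continuousWithinAt) ?_ ?_
  · simpa only [interior_Ioi] using fun x hx => (hderiv x hx).hasDerivWithinAt
  · rw [interior_Ioi]
    exact fun x hx => by linarith [one_sub_inv_le_log_of_pos (mem_Ioi.1 hx)]

lemma add_one_mul_log_le_two_mul_sub_one {x : ℝ} (h0 : 0 < x) (h1 : x ≤ 1) :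
    (x + 1) * log x ≤ 2 * (x - 1) := by
  have := monotoneOn_add_one_mul_log_sub_two_mul_sub_one h0 (mem_Ioi.2 one_pos) h1
  simp only [log_one, mul_zero, sub_self] at this
  linarith

lemma two_mul_sub_one_le_add_one_mul_log {x : ℝ} (h1 : 1 ≤ x) :
    2 * (x - 1) ≤ (x + 1) * log x := by
  have := monotoneOn_add_one_mul_log_sub_two_mul_sub_one (mem_Ioi.2 one_pos)
    (mem_Ioi.2 (by linarith)) h1
  simp only [log_one, mul_zero, sub_self] at this
  linarith

lemma three_mul_sq_sub_one_le_mul_klFun {x : ℝ} (hx : 0 ≤ x) :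
    3 * (x - 1) ^ 2 ≤ 2 * (x + 2) * klFun x := by
  set F : ℝ → ℝ := fun x => 2 * (x + 2) * klFun x - 3 * (x - 1) ^ 2
  set F' : ℝ → ℝ := fun x => 4 * ((x + 1) * log x - 2 * (x - 1))
  have hcont : Continuous F := by fun_prop
  have hderiv : ∀ x, 0 < x → HasDerivAt F (F' x) x := by
    intro x hx
    refine (((((hasDerivAt_id x).add_const 2).const_mul 2).mul (hasDerivAt_klFun hx.ne')).sub
      ((((hasDerivAt_id x).sub_const 1).pow 2).const_mul 3)).congr_deriv ?_
    simp only [klFun, id]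
    ring
  suffices F 1 ≤ F x by simpa [F, klFun_one] using this
  rcases le_total x 1 with h | h
  · refine antitoneOn_of_hasDerivWithinAt_nonpos (f' := F') (convex_Icc 0 1) hcont.continuousOn
      (fun y hy => ?_) (fun y hy => ?_) ⟨hx, h⟩ ⟨zero_le_one, le_rfl⟩ h
    · rw [interior_Icc] at hy
      exact (hderiv y hy.1).hasDerivWithinAt
    · rw [interior_Icc] at hy
      linarith [add_one_mul_log_le_two_mul_sub_one hy.1 hy.2.le]
  · refine monotoneOn_of_hasDerivWithinAt_nonneg (f' := F') (convex_Ici 1) hcont.continuousOn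
      (fun y hy => ?_) (fun y hy => ?_) self_mem_Ici h h
    · rw [interior_Ici] at hy
      exact (hderiv y (one_pos.trans hy)).hasDerivWithinAt
    · rw [interior_Ici] at hy
      linarith [two_mul_sub_one_le_add_one_mul_log hy.le]

lemma three_mul_sq_sub_div_le {p q : ℝ} (hp : 0 ≤ p) (hq : 0 ≤ q) (hpq : q = 0 → p = 0) :
    3 * (p - q) ^ 2 / (p + 2 * q) ≤ 2 * (p * log p - p * log q - p + q) := by
  rcases hq.eq_or_lt with rfl | hq
  · simp [hpq rfl]
  have hkl : q * klFun (p / q) = p * log p - p * log q - p + q := by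
    rcases hp.eq_or_lt with rfl | hp
    · simp [klFun]
    rw [klFun, log_div hp.ne' hq.ne']
    field_simp
    ring
  have hsq : 3 * (p - q) ^ 2 = q ^ 2 * (3 * (p / q - 1) ^ 2) := by field_simp
  rw [div_le_iff₀ (by positivity), ← hkl, hsq]
  calc q ^ 2 * (3 * (p / q - 1) ^ 2) ≤ q ^ 2 * (2 * (p / q + 2) * klFun (p / q)) :=
        mul_le_mul_of_nonneg_left (three_mul_sq_sub_one_le_mul_klFun (div_nonneg hp hq.le))
          (sq_nonneg q)
    _ = 2 * (q * klFun (p / q)) * (p + 2 * q) := by field_simp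

end Real

section DoublyStochastic

open Finset Real

lemma sum_sum_mul_add_of_mem_doublyStochastic {A : Matrix d d ℝ}
    (hA : A ∈ doublyStochastic ℝ d) (x y : d → ℝ) :
    ∑ i, ∑ j, A i j * (x i + y j) = ∑ i, x i + ∑ j, y j := by
  simp only [mul_add, sum_add_distrib, ← sum_mul, sum_row_of_mem_doublyStochastic hA, one_mul]
  rw [sum_comm]
  simp only [← sum_mul, sum_col_of_mem_doublyStochastic hA, one_mul]

lemma sum_sum_mul_three_mul_sq_sub_div_le {p q : d → ℝ} {A : Matrix d d ℝ}
    (hp : ∀ i, 0 ≤ p i) (hq : ∀ j, 0 ≤ q j) (hp1 : ∑ i, p i = 1) (hq1 : ∑ j, q j = 1)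
    (hA : A ∈ doublyStochastic ℝ d) (hsupp : ∀ i j, q j = 0 → A i j * p i = 0) :
    ∑ i, ∑ j, A i j * (3 * (p i - q j) ^ 2 / (p i + 2 * q j)) ≤
      2 * (∑ i, p i * log (p i) - ∑ i, ∑ j, A i j * (p i * log (q j))) :=
  calc _ ≤ ∑ i, ∑ j, A i j * (2 * (p i * log (p i) - p i * log (q j) - p i + q j)) := by
        refine sum_le_sum fun i _ => sum_le_sum fun j _ => ?_
        by_cases hA0 : A i j = 0
        · simp [hA0]
        exact mul_le_mul_of_nonneg_left (three_mul_sq_sub_div_le (hp i) (hq j)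
          fun h => (mul_eq_zero.1 (hsupp i j h)).resolve_left hA0)
          (nonneg_of_mem_doublyStochastic hA)
    _ = 2 * (∑ i, ∑ j, A i j * ((p i * log (p i) - p i) + q j) -
          ∑ i, ∑ j, A i j * (p i * log (q j))) := by
        simp only [mul_sum, ← sum_sub_distrib]
        exact sum_congr rfl fun i _ => sum_congr rfl fun j _ => by ring
    _ = _ := by
        rw [sum_sum_mul_add_of_mem_doublyStochastic hA, sum_sub_distrib, hp1, hq1]
        ring

theorem sq_sum_sub_mul_le_of_mem_doublyStochastic {p q : d → ℝ} {A B : Matrix d d ℝ}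
    {r : d → d → ℝ} (hp : ∀ i, 0 ≤ p i) (hq : ∀ j, 0 ≤ q j)
    (hp1 : ∑ i, p i = 1) (hq1 : ∑ j, q j = 1)
    (hA : A ∈ doublyStochastic ℝ d) (hB : B ∈ doublyStochastic ℝ d)
    (hr : ∀ i j, r i j ^ 2 ≤ A i j * B i j) (hsupp : ∀ i j, q j = 0 → A i j * p i = 0) :
    (∑ i, ∑ j, (p i - q j) * r i j) ^ 2 ≤
      2 * (∑ i, p i * log (p i) - ∑ i, ∑ j, A i j * (p i * log (q j))) := by
  set f : d → d → ℝ := fun i j => A i j * (3 * (p i - q j) ^ 2 / (p i + 2 * q j))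
  set g : d → d → ℝ := fun i j => B i j * ((p i + 2 * q j) / 3)
  have hpq : ∀ i j, 0 ≤ p i + 2 * q j := fun i j => by linarith [hp i, hq j]
  have hcs : (∑ i, ∑ j, (p i - q j) * r i j) ^ 2 ≤ (∑ i, ∑ j, f i j) * ∑ i, ∑ j, g i j := by
    simp only [← Fintype.sum_prod_type']
    refine sum_sq_le_sum_mul_sum_of_sq_le_mul _ (fun x _ => ?_) (fun x _ => ?_) (fun x _ => ?_)
    · exact mul_nonneg (nonneg_of_mem_doublyStochastic hA) (by have := hpq x.1 x.2; positivity)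
    · exact mul_nonneg (nonneg_of_mem_doublyStochastic hB) (by have := hpq x.1 x.2; positivity)
    obtain ⟨i, j⟩ := x
    change ((p i - q j) * r i j) ^ 2 ≤ f i j * g i j
    rcases (hpq i j).eq_or_lt with h | h
    · obtain ⟨hpi, hqj⟩ : p i = 0 ∧ q j = 0 := by constructor <;> linarith [hp i, hq j]
      simp [f, g, hpi, hqj]
    calc ((p i - q j) * r i j) ^ 2 ≤ (p i - q j) ^ 2 * (A i j * B i j) := by
          rw [mul_pow]; gcongr; exact hr i j
      _ = f i j * g i j := by
          simp only [f, g]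
          field_simp
          exact (mul_div_cancel_right₀ _ (by linarith)).symm
  have hg : ∑ i, ∑ j, g i j = 1 := by
    have := sum_sum_mul_add_of_mem_doublyStochastic hB (fun i => p i / 3) (fun j => 2 * q j / 3)
    simp only [← sum_div, ← mul_sum, hp1, hq1] at this
    calc ∑ i, ∑ j, g i j = ∑ i, ∑ j, B i j * (p i / 3 + 2 * q j / 3) :=
          sum_congr rfl fun i _ => sum_congr rfl fun j _ => by ring
      _ = 1 := by rw [this]; norm_num
  calc _ ≤ (∑ i, ∑ j, f i j) * ∑ i, ∑ j, g i j := hcs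
    _ ≤ _ := by
      rw [hg, mul_one]
      exact sum_sum_mul_three_mul_sq_sub_div_le hp hq hp1 hq1 hA hsupp

end DoublyStochastic

namespace Matrix

variable {U V : Matrix d d ℂ}

lemma norm_sq_mem_doublyStochastic (hU : U ∈ unitaryGroup d ℂ) :
    (of fun i j => ‖U i j‖ ^ 2) ∈ doublyStochastic ℝ d := by
  have hrow : ∀ i, ∑ j, U i j * star (U i j) = 1 := fun i => by
    simpa [mul_apply, one_apply] using congr_fun (congr_fun (mem_unitaryGroup_iff.1 hU) i) i
  have hcol : ∀ j, ∑ i, star (U i j) * U i j = 1 := fun j => by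
    simpa [mul_apply, one_apply] using congr_fun (congr_fun (mem_unitaryGroup_iff'.1 hU) j) j
  refine mem_doublyStochastic_iff_sum.2 ⟨fun _ _ => by simp only [of_apply]; positivity,
    fun i => ?_, fun j => ?_⟩
  · simp only [Complex.star_def, Complex.mul_conj', ← Complex.ofReal_pow] at hrow
    exact_mod_cast hrow i
  · simp only [Complex.star_def, Complex.conj_mul', ← Complex.ofReal_pow] at hcol
    exact_mod_cast hcol j

lemma conj_diagonal_mul_conj_diagonal (hU : U ∈ unitaryGroup d ℂ) (a b : d → ℂ) :
    U * diagonal a * star U * (U * diagonal b * star U) =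
      U * diagonal (fun i => a i * b i) * star U := by
  simp only [Matrix.mul_assoc, ← Matrix.mul_assoc (star U), Unitary.star_mul_self_of_mem hU,
    Matrix.one_mul, ← Matrix.mul_assoc (diagonal a), diagonal_mul_diagonal]

lemma trace_conj_diagonal (hU : U ∈ unitaryGroup d ℂ) (a : d → ℂ) :
    (U * diagonal a * star U).trace = ∑ i, a i := by
  rw [trace_mul_cycle, Unitary.star_mul_self_of_mem hU, Matrix.one_mul, trace_diagonal]

lemma trace_conj_diagonal_mul_eq_sum_diag (a : d → ℂ) (X : Matrix d d ℂ) :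
    (U * diagonal a * star U * X).trace = ∑ i, a i * (star U * X * U) i i := by
  rw [show U * diagonal a * star U * X = U * (diagonal a * (star U * X)) by
    simp only [Matrix.mul_assoc], trace_mul_comm, Matrix.mul_assoc]
  simp [trace, diagonal_mul]

lemma trace_conj_diagonal_mul (hV : V ∈ unitaryGroup d ℂ) (a : d → ℂ) (X : Matrix d d ℂ) :
    (U * diagonal a * star U * X).trace =
      ∑ i, ∑ j, a i * ((star U * X * V) i j * star ((star U * V) i j)) := by
  have h : star U * X * U = star U * X * V * star (star U * V) := by
    rw [star_mul, star_star, Matrix.mul_assoc _ V, ← Matrix.mul_assoc V,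
      Unitary.mul_star_self_of_mem hV, Matrix.one_mul]
  simp only [trace_conj_diagonal_mul_eq_sum_diag, h, mul_apply (M := star U * X * V), star_apply,
    Finset.mul_sum]

lemma trace_conj_diagonal_mul' (hU : U ∈ unitaryGroup d ℂ) (b : d → ℂ) (X : Matrix d d ℂ) :
    (V * diagonal b * star V * X).trace =
      ∑ i, ∑ j, b j * ((star U * X * V) i j * star ((star U * V) i j)) := by
  have h : star V * X * V = star (star U * V) * (star U * X * V) := by
    simp only [star_mul, star_star, Matrix.mul_assoc]
    rw [← Matrix.mul_assoc U, Unitary.mul_star_self_of_mem hU, Matrix.one_mul]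
  simp only [trace_conj_diagonal_mul_eq_sum_diag, h, mul_apply (N := star U * X * V), star_apply,
    Finset.mul_sum]
  rw [Finset.sum_comm]
  exact Finset.sum_congr rfl fun i _ => Finset.sum_congr rfl fun j _ => by ring

end Matrix

section FunctionalCalculus

variable {A : Matrix d d ℂ}

lemma mfun_of_isHermitian (hA : A.IsHermitian) (f : ℝ → ℝ) :
    mfun f A = (hA.eigenvectorUnitary : Matrix d d ℂ) *
      diagonal (fun i => (f (hA.eigenvalues i) : ℂ)) *
        star (hA.eigenvectorUnitary : Matrix d d ℂ) := by
  rw [mfun, dif_pos hA]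

lemma mfun_congr (hA : A.IsHermitian) {f g : ℝ → ℝ}
    (h : ∀ i, f (hA.eigenvalues i) = g (hA.eigenvalues i)) : mfun f A = mfun g A := by
  simp only [mfun_of_isHermitian hA, h]

lemma mfun_id (hA : A.IsHermitian) : mfun id A = A := by
  conv_rhs => rw [hA.spectral_theorem]
  rw [mfun_of_isHermitian hA, Unitary.conjStarAlgAut_apply]
  rfl

lemma mfun_const (hA : A.IsHermitian) (c : ℝ) : mfun (fun _ => c) A = (c : ℂ) • 1 := by
  rw [mfun_of_isHermitian hA, ← smul_one_eq_diagonal, Matrix.mul_smul, Matrix.mul_one,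
    Matrix.smul_mul, Unitary.mul_star_self_of_mem hA.eigenvectorUnitary.2]

lemma mfun_mul_mfun (hA : A.IsHermitian) (f g : ℝ → ℝ) :
    mfun f A * mfun g A = mfun (fun x => f x * g x) A := by
  simp only [mfun_of_isHermitian hA, Complex.ofReal_mul]
  exact conj_diagonal_mul_conj_diagonal hA.eigenvectorUnitary.2 _ _

lemma mul_mfun (hA : A.IsHermitian) (g : ℝ → ℝ) : A * mfun g A = mfun (fun x => x * g x) A :=
  calc A * mfun g A = mfun id A * mfun g A := by rw [mfun_id hA]
    _ = _ := mfun_mul_mfun hA id g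

lemma star_mfun (hA : A.IsHermitian) (f : ℝ → ℝ) : star (mfun f A) = mfun f A := by
  have : star (fun i => (f (hA.eigenvalues i) : ℂ)) = fun i => (f (hA.eigenvalues i) : ℂ) :=
    funext fun i => Complex.conj_ofReal _
  simp [mfun_of_isHermitian hA, star_mul, Matrix.mul_assoc, star_eq_conjTranspose,
    diagonal_conjTranspose, this]

lemma trace_mfun (hA : A.IsHermitian) (f : ℝ → ℝ) :
    (mfun f A).trace = ∑ i, (f (hA.eigenvalues i) : ℂ) := by
  rw [mfun_of_isHermitian hA, trace_conj_diagonal hA.eigenvectorUnitary.2]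

lemma exists_mem_unitaryGroup_traceNorm_eq (hA : A.IsHermitian) :
    ∃ S ∈ unitaryGroup d ℂ, traceNorm A = (A * S).trace.re := by
  set sgn : ℝ → ℝ := fun x => if x < 0 then -1 else 1
  refine ⟨mfun sgn A, mem_unitaryGroup_iff.2 ?_, ?_⟩
  · rw [star_mfun hA, mfun_mul_mfun hA, mfun_congr hA (g := fun _ => 1) fun i => ?_,
      mfun_const hA]
    · simp
    · simp only [sgn]; split_ifs <;> norm_num
  · rw [traceNorm, mul_mfun hA]
    congr 4
    ext x
    simp only [sgn]
    split_ifs with h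
    · rw [abs_of_neg h]; ring
    · rw [abs_of_nonneg (not_lt.1 h), mul_one]

lemma logm_eq_mfun_log (hA : A.PosSemidef) : logm A = mfun Real.log A := by
  refine mfun_congr hA.1 fun i => ?_
  split_ifs with h
  · rw [le_antisymm h (hA.eigenvalues_nonneg i), Real.log_zero]
  · rfl

end FunctionalCalculus

section EigenOverlap

variable {ρ σ : Matrix d d ℂ} (hρ : ρ.IsHermitian) (hσ : σ.IsHermitian)

noncomputable def eigenOverlap : Matrix d d ℂ :=
  star (hρ.eigenvectorUnitary : Matrix d d ℂ) * hσ.eigenvectorUnitary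

lemma eigenOverlap_mem_unitaryGroup : eigenOverlap hρ hσ ∈ unitaryGroup d ℂ :=
  Submonoid.mul_mem _ (Unitary.star_mem hρ.eigenvectorUnitary.2) hσ.eigenvectorUnitary.2

lemma trace_mul_eq_sum_eigenOverlap (X : Matrix d d ℂ) :
    (ρ * X).trace = ∑ i, ∑ j, (hρ.eigenvalues i : ℂ) *
      ((star (hρ.eigenvectorUnitary : Matrix d d ℂ) * X * hσ.eigenvectorUnitary) i j *
        star (eigenOverlap hρ hσ i j)) := by
  conv_lhs => rw [← mfun_id hρ, mfun_of_isHermitian hρ]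
  rw [trace_conj_diagonal_mul hσ.eigenvectorUnitary.2]
  rfl

lemma trace_mul_eq_sum_eigenOverlap' (X : Matrix d d ℂ) :
    (σ * X).trace = ∑ i, ∑ j, (hσ.eigenvalues j : ℂ) *
      ((star (hρ.eigenvectorUnitary : Matrix d d ℂ) * X * hσ.eigenvectorUnitary) i j *
        star (eigenOverlap hρ hσ i j)) := by
  conv_lhs => rw [← mfun_id hσ, mfun_of_isHermitian hσ]
  rw [trace_conj_diagonal_mul' hρ.eigenvectorUnitary.2]
  rfl

lemma trace_mul_mfun (g : ℝ → ℝ) :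
    (ρ * mfun g σ).trace = ∑ i, ∑ j,
      ((hρ.eigenvalues i * g (hσ.eigenvalues j) * ‖eigenOverlap hρ hσ i j‖ ^ 2 : ℝ) : ℂ) := by
  have h : star (hρ.eigenvectorUnitary : Matrix d d ℂ) * mfun g σ * hσ.eigenvectorUnitary =
      eigenOverlap hρ hσ * diagonal (fun j => (g (hσ.eigenvalues j) : ℂ)) := by
    simp [mfun_of_isHermitian hσ, eigenOverlap, Matrix.mul_assoc]
  simp only [trace_mul_eq_sum_eigenOverlap hρ hσ, h, mul_diagonal, Complex.star_def,
    mul_right_comm _ _ ((starRingEnd ℂ) _), Complex.mul_conj']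
  push_cast
  exact Finset.sum_congr rfl fun i _ => Finset.sum_congr rfl fun j _ => by ring

lemma exists_traceNorm_sub_eq_sum :
    ∃ N ∈ unitaryGroup d ℂ, traceNorm (ρ - σ) = ∑ i, ∑ j,
      (hρ.eigenvalues i - hσ.eigenvalues j) * (N i j * star (eigenOverlap hρ hσ i j)).re := by
  obtain ⟨S, hS, h⟩ := exists_mem_unitaryGroup_traceNorm_eq (hρ.sub hσ)
  refine ⟨star (hρ.eigenvectorUnitary : Matrix d d ℂ) * S * hσ.eigenvectorUnitary,
    Submonoid.mul_mem _ (Submonoid.mul_mem _ (Unitary.star_mem hρ.eigenvectorUnitary.2) hS)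
      hσ.eigenvectorUnitary.2, ?_⟩
  rw [h, sub_mul, trace_sub, trace_mul_eq_sum_eigenOverlap hρ hσ,
    trace_mul_eq_sum_eigenOverlap' hρ hσ]
  simp only [← Finset.sum_sub_distrib, ← sub_mul, Complex.re_sum]
  exact Finset.sum_congr rfl fun i _ => Finset.sum_congr rfl fun j _ => by
    rw [← Complex.ofReal_sub, Complex.re_ofReal_mul]

end EigenOverlap

lemma qRelEnt_eq_sum {ρ σ : Matrix d d ℂ} (hρ : ρ.PosSemidef) (hσ : σ.PosSemidef) :
    qRelEnt ρ σ = ∑ i, hρ.1.eigenvalues i * Real.log (hρ.1.eigenvalues i) -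
      ∑ i, ∑ j, ‖eigenOverlap hρ.1 hσ.1 i j‖ ^ 2 *
        (hρ.1.eigenvalues i * Real.log (hσ.1.eigenvalues j)) := by
  rw [qRelEnt, logm_eq_mfun_log hρ, logm_eq_mfun_log hσ, Matrix.mul_sub, trace_sub,
    mul_mfun hρ.1, trace_mfun hρ.1, trace_mul_mfun hρ.1 hσ.1, Complex.sub_re]
  simp only [Complex.re_sum, Complex.ofReal_re]
  congr 1
  exact Finset.sum_congr rfl fun i _ => Finset.sum_congr rfl fun j _ => by ring

lemma SuppSubset.norm_sq_eigenOverlap_mul_eq_zero {ρ σ : Matrix d d ℂ} (h : SuppSubset ρ σ)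
    (hρ : ρ.PosSemidef) (hσ : σ.IsHermitian) {i j : d} (hj : hσ.eigenvalues j = 0) :
    ‖eigenOverlap hρ.1 hσ i j‖ ^ 2 * hρ.1.eigenvalues i = 0 := by
  set ker : ℝ → ℝ := fun x => if x = 0 then 1 else 0
  have hσker : σ * mfun ker σ = 0 := by
    rw [mul_mfun hσ, mfun_congr hσ (g := fun _ => 0) fun _ => by simp [ker], mfun_const hσ]
    simp
  have hρker : ρ * mfun ker σ = 0 := by
    ext k l
    exact congr_fun (h _ (funext fun k => congr_fun (congr_fun hσker k) l)) k
  have hsum := congr_arg (fun M => M.trace.re) hρker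
  simp only [trace_mul_mfun hρ.1 hσ, trace_zero, Complex.zero_re, Complex.re_sum,
    Complex.ofReal_re] at hsum
  have hnonneg : ∀ i j,
      0 ≤ hρ.1.eigenvalues i * ker (hσ.eigenvalues j) * ‖eigenOverlap hρ.1 hσ i j‖ ^ 2 := by
    intro i j
    have := hρ.eigenvalues_nonneg i
    simp only [ker]
    split_ifs <;> positivity
  have := (Finset.sum_eq_zero_iff_of_nonneg fun j _ => hnonneg i j).1
    ((Finset.sum_eq_zero_iff_of_nonneg fun i _ => Finset.sum_nonneg fun j _ => hnonneg i j).1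
      hsum i (Finset.mem_univ i)) j (Finset.mem_univ j)
  simpa [ker, hj, mul_comm] using this

/-- Quantum Pinsker inequality. For density matrices `ρ`, `σ` with
`supp(ρ) ⊆ supp(σ)`, the trace distance satisfies `‖ρ − σ‖₁² ≤ 2·D(ρ‖σ)`
with the natural-logarithm relative entropy (equivalently `‖ρ−σ‖₁² ≤ 2 ln 2 · D₂(ρ‖σ)`
in base 2). -/
theorem quantum_pinsker (ρ σ : Matrix d d ℂ)
    (hρ : ρ.PosSemidef) (hρ1 : ρ.trace = 1)
    (hσ : σ.PosSemidef) (hσ1 : σ.trace = 1)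
    (hsupp : SuppSubset ρ σ) :
    traceNorm (ρ - σ) ^ 2 ≤ 2 * qRelEnt ρ σ := by
  obtain ⟨N, hN, hT⟩ := exists_traceNorm_sub_eq_sum hρ.1 hσ.1
  rw [hT, qRelEnt_eq_sum hρ hσ]
  refine sq_sum_sub_mul_le_of_mem_doublyStochastic hρ.eigenvalues_nonneg hσ.eigenvalues_nonneg
    ?_ ?_ (norm_sq_mem_doublyStochastic (eigenOverlap_mem_unitaryGroup hρ.1 hσ.1))
    (norm_sq_mem_doublyStochastic hN) (fun i j => ?_)
    (fun i j hj => hsupp.norm_sq_eigenOverlap_mul_eq_zero hρ hσ.1 hj)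
  · simpa using congr_arg Complex.re (hρ.1.trace_eq_sum_eigenvalues.symm.trans hρ1)
  · simpa using congr_arg Complex.re (hσ.1.trace_eq_sum_eigenvalues.symm.trans hσ1)
  · simpa [norm_mul, mul_pow, mul_comm] using pow_le_pow_left₀ (abs_nonneg _)
      (Complex.abs_re_le_norm (N i j * star (eigenOverlap hρ.1 hσ.1 i j))) 2
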